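/- arXiv:1806.03428 — 2 statements merged into one kernel-verified Lean document; each statement's English description precedes it below -/
import Mathlib

section
/- Assume the ultracontractive bound. Let 0 < α < β, let 1 ≤ p < β/α, and set q = pβ/(β − pα). There exists a constant C > 0, depending only on p, α, β and C₀, such that every f ∈ B^{p,α}(X) satisfies the weak-type Sobolev inequality sup_{s>0} s · μ({x ∈ X : |f(x)| ≥ s})^{1/q} ≤ C · ‖f‖_{p,α}. -/
/-!
Two estimates on the heat semigroup `P_t` control `f` at every scale `t`. Jensen's inequality for the
probability densities `p_t(x, ·)` gives `‖f - P_t f‖_p ≤ t^α ‖f‖_{p,α}`, and ultracontractivity gives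
`‖P_t g‖_∞ ≤ C₀^{1/p} t^{-β/p} ‖g‖_p`. Since `P_u f - P_{2u} f = P_u (f - P_u f)`, the telescoping
sum `P_t f = ∑ₙ (P_{2ⁿt} f - P_{2ⁿ⁺¹t} f)` is geometric with ratio `2^{α-β/p} < 1`, so
`‖P_t f‖_∞ ≤ c t^{α-β/p} ‖f‖_{p,α}` with `c = C₀^{1/p} / (1 - 2^{α-β/p})`. Choosing `t` with
`c t^{α-β/p} ‖f‖_{p,α} = s/2`, Chebyshev's inequality for `f - P_t f` on
`{|f| ≥ s} ⊆ {|f - P_t f| ≥ s/2}` gives the weak-type bound with `C = 2 c^{pα/β}`.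
-/

open MeasureTheory ENNReal Metric Filter

noncomputable section

namespace BesovDirichlet

variable {X : Type*} [MeasurableSpace X]

/-- A heat kernel on a measure space: jointly measurable, nonnegative, symmetric,
satisfying the semigroup property and conservative. -/
structure IsHeatKernel (μ : Measure X) (K : ℝ → X → X → ℝ) : Prop where
  measurable : ∀ t : ℝ, Measurable fun xy : X × X => K t xy.1 xy.2
  nonneg : ∀ (t : ℝ) (x y : X), 0 ≤ K t x y
  symm : ∀ (t : ℝ) (x y : X), K t x y = K t y x
  semigroup : ∀ s t : ℝ, 0 < s → 0 < t →
    ∀ᵐ xy ∂(μ.prod μ), (∫ z, K t xy.1 z * K s z xy.2 ∂μ) = K (t + s) xy.1 xy.2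
  conservative : ∀ t : ℝ, 0 < t → ∀ᵐ x ∂μ, (∫ y, K t x y ∂μ) = 1

/-- The heat semigroup `P_t f (x) = ∫ p_t(x,y) f(y) dμ(y)`. -/
def heatOp (μ : Measure X) (K : ℝ → X → X → ℝ) (t : ℝ) (f : X → ℝ) (x : X) : ℝ :=
  ∫ y, K t x y * f y ∂μ

/-- The double integral `∫∫ |f(x) − f(y)|^p p_t(x,y) dμ(x) dμ(y)` as an extended real. -/
def besovEnergy (μ : Measure X) (K : ℝ → X → X → ℝ) (p t : ℝ) (f : X → ℝ) : ℝ≥0∞ :=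
  ∫⁻ x, (∫⁻ y, ENNReal.ofReal (|f x - f y| ^ p) * ENNReal.ofReal (K t x y) ∂μ) ∂μ

/-- The heat-semigroup Besov seminorm `‖f‖_{p,α}`. -/
def besovSeminorm (μ : Measure X) (K : ℝ → X → X → ℝ) (p α : ℝ) (f : X → ℝ) : ℝ≥0∞ :=
  ⨆ (t : ℝ) (_ : 0 < t), ENNReal.ofReal (t ^ (-α)) * besovEnergy μ K p t f ^ (1 / p)

/-- Membership in the Besov space `B^{p,α}(X)`. -/
def MemBesov (μ : Measure X) (K : ℝ → X → X → ℝ) (p α : ℝ) (f : X → ℝ) : Prop :=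
  MemLp f (ENNReal.ofReal p) μ ∧ besovSeminorm μ K p α f ≠ ∞

/-- Ultracontractive bound `p_t(x,y) ≤ C₀ t^{−β}`. -/
def Ultracontractive (μ : Measure X) (K : ℝ → X → X → ℝ) (C₀ β : ℝ) : Prop :=
  ∀ t : ℝ, 0 < t → ∀ᵐ xy ∂(μ.prod μ), K t xy.1 xy.2 ≤ C₀ * t ^ (-β)

lemma lintegral_mul_rpow_le_of_lintegral_eq_one {μ : Measure X} {p : ℝ} {h k : X → ℝ≥0∞}
    (hp : 1 ≤ p) (hh : AEMeasurable h μ) (hk : AEMeasurable k μ) (hk1 : ∫⁻ y, k y ∂μ = 1) :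
    (∫⁻ y, h y * k y ∂μ) ^ p ≤ ∫⁻ y, h y ^ p * k y ∂μ := by
  have : IsProbabilityMeasure (μ.withDensity k) :=
    ⟨by rw [withDensity_apply _ .univ, Measure.restrict_univ, hk1]⟩
  have hJensen := eLpNorm_le_eLpNorm_of_exponent_le (μ := μ.withDensity k) (p := 1)
    (q := ENNReal.ofReal p) (by simpa using hp)
    (hh.mono_ac (withDensity_absolutelyContinuous μ k)).aestronglyMeasurable
  rw [eLpNorm_one_eq_lintegral_enorm, eLpNorm_eq_lintegral_rpow_enorm_toReal (by simp; linarith)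
    (by simp), toReal_ofReal (by linarith), lintegral_withDensity_eq_lintegral_mul₀ hk hh.enorm,
    lintegral_withDensity_eq_lintegral_mul₀ hk (hh.enorm.pow_const _), one_div,
    ENNReal.le_rpow_inv_iff (by linarith)] at hJensen
  simpa only [enorm_eq_self, Pi.mul_apply, mul_comm (k _)] using hJensen

namespace IsHeatKernel

variable {μ : Measure X} {K : ℝ → X → X → ℝ} {s t : ℝ}

lemma measurable_apply (hK : IsHeatKernel μ K) (t : ℝ) (x : X) : Measurable (K t x) :=
  (hK.measurable t).comp measurable_prodMk_left

lemma ae_integrable (hK : IsHeatKernel μ K) (ht : 0 < t) : ∀ᵐ x ∂μ, Integrable (K t x) μ := by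
  filter_upwards [hK.conservative t ht] with x hx
  by_contra h
  rw [integral_undef h] at hx
  exact zero_ne_one hx

lemma ae_lintegral_eq_one (hK : IsHeatKernel μ K) (ht : 0 < t) :
    ∀ᵐ x ∂μ, ∫⁻ y, ENNReal.ofReal (K t x y) ∂μ = 1 := by
  filter_upwards [hK.conservative t ht, hK.ae_integrable ht] with x hx hint
  rw [← ofReal_integral_eq_lintegral_ofReal hint (ae_of_all _ (hK.nonneg t x)), hx, ofReal_one]

/-- By Tonelli and conservativity, `∫∫ p_t(x,z) p_s(z,y) dz dy = 1` for a.e. `x`. -/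
lemma ae_ae_integrable_mul [SFinite μ] (hK : IsHeatKernel μ K) (hs : 0 < s) (ht : 0 < t) :
    ∀ᵐ x ∂μ, ∀ᵐ y ∂μ, Integrable (fun z => K t x z * K s z y) μ := by
  have hmeas : ∀ x, Measurable (Function.uncurry fun y z =>
      ENNReal.ofReal (K t x z) * ENNReal.ofReal (K s z y)) := fun x =>
    ((ENNReal.measurable_ofReal.comp (hK.measurable_apply t x)).comp measurable_snd).mul
      (ENNReal.measurable_ofReal.comp ((hK.measurable s).comp measurable_swap))
  filter_upwards [hK.ae_lintegral_eq_one ht] with x hx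
  have hTonelli : ∫⁻ y, ∫⁻ z, ENNReal.ofReal (K t x z) * ENNReal.ofReal (K s z y) ∂μ ∂μ = 1 := by
    rw [lintegral_lintegral_swap (hmeas x).aemeasurable, ← hx]
    refine lintegral_congr_ae ?_
    filter_upwards [hK.ae_lintegral_eq_one hs] with z hz
    rw [lintegral_const_mul' _ _ ofReal_ne_top, hz, mul_one]
  filter_upwards [ae_lt_top (hmeas x).lintegral_prod_right' (hTonelli ▸ one_ne_top)] with y hy
  refine ⟨((hK.measurable_apply t x).mul ((hK.measurable s).comp
    (measurable_id.prodMk measurable_const))).aestronglyMeasurable, ?_⟩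
  rw [hasFiniteIntegral_iff_ofReal (ae_of_all _ fun z => mul_nonneg (hK.nonneg t x z)
    (hK.nonneg s z y))]
  simpa only [ENNReal.ofReal_mul (hK.nonneg t x _), Function.uncurry_apply_pair] using hy

end IsHeatKernel

section HeatSemigroup

variable {μ : Measure X} {K : ℝ → X → X → ℝ} {s t : ℝ} {g : X → ℝ}

lemma measurable_heatOp [SFinite μ] (hK : IsHeatKernel μ K) (hg : Measurable g) (t : ℝ) :
    Measurable (heatOp μ K t g) :=
  (StronglyMeasurable.integral_prod_right (f := fun x y => K t x y * g y)
    ((hK.measurable t).mul (hg.comp measurable_snd)).stronglyMeasurable).measurable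

lemma heatOp_sub {x : X} {g₁ g₂ : X → ℝ} (h₁ : Integrable (fun y => K t x y * g₁ y) μ)
    (h₂ : Integrable (fun y => K t x y * g₂ y) μ) :
    heatOp μ K t (g₁ - g₂) x = heatOp μ K t g₁ x - heatOp μ K t g₂ x := by
  simp only [heatOp, Pi.sub_apply, mul_sub]
  exact integral_sub h₁ h₂

lemma heatOp_heatOp [SFinite μ] (hK : IsHeatKernel μ K) (hs : 0 < s) (ht : 0 < t)
    (hg : Measurable g) (hint : ∀ᵐ x ∂μ, Integrable (fun y => K (t + s) x y * g y) μ) :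
    ∀ᵐ x ∂μ, heatOp μ K t (heatOp μ K s g) x = heatOp μ K (t + s) g x := by
  filter_upwards [Measure.ae_ae_of_ae_prod (hK.semigroup s t hs ht), hK.ae_ae_integrable_mul hs ht,
    hint] with x hsemi hsection hxint
  have hprod : Integrable (Function.uncurry fun z y => K t x z * (K s z y * g y)) (μ.prod μ) := by
    have hmeas : Measurable (Function.uncurry fun z y => K t x z * (K s z y * g y)) :=
      ((hK.measurable_apply t x).comp measurable_fst).mul
        ((hK.measurable s).mul (hg.comp measurable_snd))
    refine (integrable_prod_iff' hmeas.aestronglyMeasurable).2 ⟨?_, ?_⟩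
    · filter_upwards [hsection] with y hy
      simpa only [Function.uncurry_apply_pair, mul_assoc] using hy.mul_const (g y)
    · refine hxint.norm.congr ?_
      filter_upwards [hsemi] with y hy
      simp only [Function.uncurry_apply_pair, norm_mul, Real.norm_of_nonneg (hK.nonneg _ _ _),
        ← mul_assoc, integral_mul_const, hy]
  calc heatOp μ K t (heatOp μ K s g) x
      = ∫ z, ∫ y, K t x z * (K s z y * g y) ∂μ ∂μ := by simp only [heatOp, integral_const_mul]
    _ = ∫ y, ∫ z, K t x z * (K s z y * g y) ∂μ ∂μ := integral_integral_swap hprod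
    _ = ∫ y, (∫ z, K t x z * K s z y ∂μ) * g y ∂μ := by simp only [← mul_assoc, integral_mul_const]
    _ = heatOp μ K (t + s) g x := integral_congr_ae (by filter_upwards [hsemi] with y hy; rw [hy])

end HeatSemigroup

section Ultracontractive

variable {μ : Measure X} {K : ℝ → X → X → ℝ} {p β C₀ t : ℝ} {g : X → ℝ}

lemma lintegral_enorm_kernel_mul_le [SFinite μ] (hK : IsHeatKernel μ K)
    (hU : Ultracontractive μ K C₀ β) (hC₀ : 0 ≤ C₀) (hp : 1 ≤ p) (ht : 0 < t)
    (hg : AEMeasurable g μ) :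
    ∀ᵐ x ∂μ, ∫⁻ y, ‖K t x y * g y‖ₑ ∂μ ≤
      ENNReal.ofReal (C₀ ^ (1 / p) * t ^ (-β / p)) * eLpNorm g (ENNReal.ofReal p) μ := by
  have hp0 : 0 < p := by linarith
  filter_upwards [hK.ae_lintegral_eq_one ht, Measure.ae_ae_of_ae_prod (hU t ht)] with x hx hxU
  have hkernel : AEMeasurable (fun y => ENNReal.ofReal (K t x y)) μ :=
    (ENNReal.measurable_ofReal.comp (hK.measurable_apply t x)).aemeasurable
  have hJensen := lintegral_mul_rpow_le_of_lintegral_eq_one hp hg.enorm hkernel hx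
  rw [← ENNReal.le_rpow_inv_iff hp0] at hJensen
  calc ∫⁻ y, ‖K t x y * g y‖ₑ ∂μ = ∫⁻ y, ‖g y‖ₑ * ENNReal.ofReal (K t x y) ∂μ := by
        simp only [enorm_mul, Real.enorm_of_nonneg (hK.nonneg t x _), mul_comm]
    _ ≤ (∫⁻ y, ‖g y‖ₑ ^ p * ENNReal.ofReal (C₀ * t ^ (-β)) ∂μ) ^ p⁻¹ := by
        refine hJensen.trans (ENNReal.rpow_le_rpow (lintegral_mono_ae ?_) (by positivity))
        filter_upwards [hxU] with y hy
        gcongr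
    _ = ENNReal.ofReal (C₀ ^ (1 / p) * t ^ (-β / p)) * eLpNorm g (ENNReal.ofReal p) μ := by
        rw [lintegral_mul_const' _ _ ofReal_ne_top, ENNReal.mul_rpow_of_nonneg _ _ (by positivity),
          eLpNorm_eq_lintegral_rpow_enorm_toReal (by simpa using hp0) ofReal_ne_top,
          toReal_ofReal hp0.le, ENNReal.ofReal_rpow_of_nonneg (by positivity) (by positivity),
          Real.mul_rpow hC₀ (by positivity), ← Real.rpow_mul ht.le, one_div, mul_comm,
          div_eq_mul_inv]

lemma ae_integrable_kernel_mul [SFinite μ] (hK : IsHeatKernel μ K)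
    (hU : Ultracontractive μ K C₀ β) (hC₀ : 0 ≤ C₀) (hp : 1 ≤ p) (ht : 0 < t)
    (hg : MemLp g (ENNReal.ofReal p) μ) :
    ∀ᵐ x ∂μ, Integrable (fun y => K t x y * g y) μ := by
  filter_upwards [lintegral_enorm_kernel_mul_le hK hU hC₀ hp ht hg.aestronglyMeasurable.aemeasurable]
    with x hx
  exact ⟨(hK.measurable_apply t x).aestronglyMeasurable.mul hg.1,
    hx.trans_lt (mul_lt_top ofReal_lt_top hg.2)⟩

lemma abs_heatOp_le [SFinite μ] (hK : IsHeatKernel μ K) (hU : Ultracontractive μ K C₀ β)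
    (hC₀ : 0 ≤ C₀) (hp : 1 ≤ p) (ht : 0 < t) (hg : MemLp g (ENNReal.ofReal p) μ) :
    ∀ᵐ x ∂μ, |heatOp μ K t g x| ≤
      C₀ ^ (1 / p) * t ^ (-β / p) * (eLpNorm g (ENNReal.ofReal p) μ).toReal := by
  filter_upwards [lintegral_enorm_kernel_mul_le hK hU hC₀ hp ht hg.aestronglyMeasurable.aemeasurable]
    with x hx
  have hbound := (enorm_integral_le_lintegral_enorm _).trans hx
  rwa [← ofReal_toReal hg.2.ne, ← ofReal_mul (by positivity), Real.enorm_eq_ofReal_abs,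
    ofReal_le_ofReal_iff (by positivity)] at hbound

end Ultracontractive

section BesovEnergy

variable {μ : Measure X} {K : ℝ → X → X → ℝ} {p α t : ℝ} {f g : X → ℝ}

lemma besovSeminorm_congr_ae (hfg : f =ᵐ[μ] g) :
    besovSeminorm μ K p α f = besovSeminorm μ K p α g := by
  have hEnergy : ∀ t, besovEnergy μ K p t f = besovEnergy μ K p t g := fun t =>
    lintegral_congr_ae <| by
      filter_upwards [hfg] with x hx
      exact lintegral_congr_ae (by filter_upwards [hfg] with y hy; rw [hx, hy])
  simp only [besovSeminorm, hEnergy]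

lemma besovEnergy_rpow_le (ht : 0 < t) :
    besovEnergy μ K p t g ^ (1 / p) ≤ ENNReal.ofReal (t ^ α) * besovSeminorm μ K p α g := by
  have hsup : ENNReal.ofReal (t ^ (-α)) * besovEnergy μ K p t g ^ (1 / p) ≤
      besovSeminorm μ K p α g :=
    le_iSup₂ (f := fun (t : ℝ) (_ : 0 < t) =>
      ENNReal.ofReal (t ^ (-α)) * besovEnergy μ K p t g ^ (1 / p)) t ht
  calc besovEnergy μ K p t g ^ (1 / p)
      = ENNReal.ofReal (t ^ α) *
          (ENNReal.ofReal (t ^ (-α)) * besovEnergy μ K p t g ^ (1 / p)) := by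
        rw [← mul_assoc, ← ofReal_mul (by positivity), ← Real.rpow_add ht, add_neg_cancel,
          Real.rpow_zero, ofReal_one, one_mul]
    _ ≤ ENNReal.ofReal (t ^ α) * besovSeminorm μ K p α g := by gcongr

lemma eLpNorm_sub_heatOp_le (hK : IsHeatKernel μ K) (hp : 1 ≤ p) (ht : 0 < t)
    (hg : Measurable g) (hint : ∀ᵐ x ∂μ, Integrable (fun y => K t x y * g y) μ) :
    eLpNorm (g - heatOp μ K t g) (ENNReal.ofReal p) μ ≤ besovEnergy μ K p t g ^ (1 / p) := by
  have hp0 : 0 < p := by linarith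
  rw [eLpNorm_eq_lintegral_rpow_enorm_toReal (by simpa using hp0) ofReal_ne_top,
    toReal_ofReal hp0.le]
  refine ENNReal.rpow_le_rpow (lintegral_mono_ae ?_) (by positivity)
  filter_upwards [hK.conservative t ht, hK.ae_integrable ht, hK.ae_lintegral_eq_one ht, hint]
    with x hcons hKint hKone hxint
  have hrepr : g x - heatOp μ K t g x = ∫ y, K t x y * (g x - g y) ∂μ := by
    simp only [mul_sub]
    rw [integral_sub (hKint.mul_const _) hxint, integral_mul_const, hcons, one_mul, heatOp]
  have hkernel : AEMeasurable (fun y => ENNReal.ofReal (K t x y)) μ :=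
    (ENNReal.measurable_ofReal.comp (hK.measurable_apply t x)).aemeasurable
  calc ‖(g - heatOp μ K t g) x‖ₑ ^ p
      ≤ (∫⁻ y, ‖g x - g y‖ₑ * ENNReal.ofReal (K t x y) ∂μ) ^ p := by
        refine ENNReal.rpow_le_rpow ?_ hp0.le
        rw [Pi.sub_apply, hrepr]
        refine (enorm_integral_le_lintegral_enorm _).trans_eq (lintegral_congr fun y => ?_)
        rw [enorm_mul, Real.enorm_of_nonneg (hK.nonneg t x y), mul_comm]
    _ ≤ ∫⁻ y, ‖g x - g y‖ₑ ^ p * ENNReal.ofReal (K t x y) ∂μ :=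
        lintegral_mul_rpow_le_of_lintegral_eq_one hp (measurable_const.sub hg).enorm.aemeasurable
          hkernel hKone
    _ = ∫⁻ y, ENNReal.ofReal (|g x - g y| ^ p) * ENNReal.ofReal (K t x y) ∂μ := by
        simp only [Real.enorm_eq_ofReal_abs, ofReal_rpow_of_nonneg (abs_nonneg _) hp0.le]

end BesovEnergy

lemma ofReal_mul_rpow_le_of_forall_le {m : ℝ≥0∞} {p α β c M s : ℝ} (hp : 0 < p) (hβ : 0 < β)
    (hpα : p * α < β) (hc : 0 < c) (hM : 0 < M) (hs : 0 < s)
    (h : ∀ t, 0 < t → c * t ^ (α - β / p) * M ≤ s / 2 →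
      m ≤ ENNReal.ofReal ((t ^ α * M / (s / 2)) ^ p)) :
    ENNReal.ofReal s * m ^ (1 / (p * β / (β - p * α))) ≤
      ENNReal.ofReal (2 * c ^ (p * α / β) * M) := by
  set θ := β / p - α with hθ_def
  set q := p * β / (β - p * α) with hq_def
  have hθ : 0 < θ := by rw [hθ_def, sub_pos, lt_div_iff₀ hp]; linarith
  have hq : 0 < q := div_pos (by positivity) (by linarith)
  have hθq : β / q = θ := by rw [hq_def, hθ_def]; field_simp
  set t := (2 * c * M / s) ^ θ⁻¹
  have ht : 0 < t := by positivity
  have htθ : t ^ θ = 2 * c * M / s := Real.rpow_inv_rpow (by positivity) hθ.ne'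
  have hcond : c * t ^ (α - β / p) * M = s / 2 := by
    rw [show α - β / p = -θ by ring, Real.rpow_neg ht.le, htθ]
    field_simp
  have hbase : t ^ α * M / (s / 2) = t ^ (β / p) / c := by
    rw [show β / p = α + θ by ring, Real.rpow_add ht, htθ]
    field_simp
  have hvalue : s * ((t ^ α * M / (s / 2)) ^ p) ^ (1 / q) = 2 * c ^ (p * α / β) * M := by
    rw [hbase, Real.div_rpow (by positivity) (by positivity), ← Real.rpow_mul ht.le,
      div_mul_cancel₀ _ hp.ne', Real.div_rpow (by positivity) (by positivity),
      ← Real.rpow_mul ht.le, ← Real.rpow_mul hc.le, mul_one_div, hθq, htθ,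
      show p * α / β = 1 - p / q by rw [hq_def]; field_simp; ring, Real.rpow_sub hc,
      Real.rpow_one]
    field_simp
  calc ENNReal.ofReal s * m ^ (1 / q)
      ≤ ENNReal.ofReal s * ENNReal.ofReal ((t ^ α * M / (s / 2)) ^ p) ^ (1 / q) := by
        gcongr
        exact h t ht hcond.le
    _ = ENNReal.ofReal (2 * c ^ (p * α / β) * M) := by
        rw [ofReal_rpow_of_nonneg (by positivity) (by positivity), ← ofReal_mul hs.le, hvalue]

lemma two_rpow_sub_div_lt_one {p α β : ℝ} (hp : 0 < p) (hpα : p * α < β) :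
    (2 : ℝ) ^ (α - β / p) < 1 :=
  Real.rpow_lt_one_of_one_lt_of_neg one_lt_two (by rw [sub_neg, lt_div_iff₀ hp]; linarith)

section WeakType

variable {μ : Measure X} {K : ℝ → X → X → ℝ} {p α β C₀ M s t : ℝ} {g : X → ℝ}

lemma abs_heatOp_sub_heatOp_two_mul_le [SFinite μ] (hK : IsHeatKernel μ K)
    (hU : Ultracontractive μ K C₀ β) (hC₀ : 0 ≤ C₀) (hp : 1 ≤ p) (ht : 0 < t)
    (hg : Measurable g) (hgLp : MemLp g (ENNReal.ofReal p) μ)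
    (hM0 : 0 ≤ M) (hM : besovSeminorm μ K p α g ≤ ENNReal.ofReal M) :
    ∀ᵐ x ∂μ, |heatOp μ K t g x - heatOp μ K (2 * t) g x| ≤ C₀ ^ (1 / p) * t ^ (α - β / p) * M := by
  have hPg := measurable_heatOp hK hg t
  have hdiff : eLpNorm (g - heatOp μ K t g) (ENNReal.ofReal p) μ ≤ ENNReal.ofReal (t ^ α * M) :=
    calc eLpNorm (g - heatOp μ K t g) (ENNReal.ofReal p) μ
        ≤ besovEnergy μ K p t g ^ (1 / p) :=
          eLpNorm_sub_heatOp_le hK hp ht hg (ae_integrable_kernel_mul hK hU hC₀ hp ht hgLp)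
      _ ≤ ENNReal.ofReal (t ^ α) * besovSeminorm μ K p α g := besovEnergy_rpow_le ht
      _ ≤ ENNReal.ofReal (t ^ α * M) := by
          rw [ofReal_mul (by positivity)]
          gcongr
  have hdiffLp : MemLp (g - heatOp μ K t g) (ENNReal.ofReal p) μ :=
    ⟨(hg.sub hPg).aestronglyMeasurable, hdiff.trans_lt ofReal_lt_top⟩
  have hPgLp : MemLp (heatOp μ K t g) (ENNReal.ofReal p) μ := by
    simpa only [sub_sub_self] using hgLp.sub hdiffLp
  filter_upwards [abs_heatOp_le hK hU hC₀ hp ht hdiffLp,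
    heatOp_heatOp hK ht ht hg (ae_integrable_kernel_mul hK hU hC₀ hp (by positivity) hgLp),
    ae_integrable_kernel_mul hK hU hC₀ hp ht hgLp, ae_integrable_kernel_mul hK hU hC₀ hp ht hPgLp]
    with x hbound hsemi hint hint'
  rw [two_mul, ← hsemi, ← heatOp_sub hint hint']
  calc |heatOp μ K t (g - heatOp μ K t g) x|
      ≤ C₀ ^ (1 / p) * t ^ (-β / p) * (t ^ α * M) := by
        refine hbound.trans ?_
        gcongr
        exact toReal_le_of_le_ofReal (by positivity) hdiff
    _ = C₀ ^ (1 / p) * t ^ (α - β / p) * M := by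
        rw [sub_eq_add_neg, Real.rpow_add ht, neg_div]
        ring

lemma abs_heatOp_le_of_besovSeminorm_le [SFinite μ] (hK : IsHeatKernel μ K)
    (hU : Ultracontractive μ K C₀ β) (hC₀ : 0 ≤ C₀) (hp : 1 ≤ p) (hβ : 0 < β)
    (hpα : p * α < β) (ht : 0 < t) (hg : Measurable g) (hgLp : MemLp g (ENNReal.ofReal p) μ)
    (hM0 : 0 ≤ M) (hM : besovSeminorm μ K p α g ≤ ENNReal.ofReal M) :
    ∀ᵐ x ∂μ, |heatOp μ K t g x| ≤
      C₀ ^ (1 / p) / (1 - 2 ^ (α - β / p)) * t ^ (α - β / p) * M := by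
  have hr := two_rpow_sub_div_lt_one (by linarith) hpα
  have hscale : ∀ n : ℕ, 0 < 2 ^ n * t := fun n => by positivity
  have hdiff := ae_all_iff.2 fun n =>
    abs_heatOp_sub_heatOp_two_mul_le hK hU hC₀ hp (hscale n) hg hgLp hM0 hM
  have hdecay := ae_all_iff.2 fun n => abs_heatOp_le hK hU hC₀ hp (hscale n) hgLp
  filter_upwards [hdiff, hdecay] with x hxdiff hxdecay
  have hlim : Tendsto (fun n : ℕ => heatOp μ K (2 ^ n * t) g x) atTop (nhds 0) := by
    refine squeeze_zero_norm (fun n => (Real.norm_eq_abs _).trans_le (hxdecay n)) ?_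
    have hβp : 0 < β / p := by positivity
    simpa [neg_div] using (((tendsto_rpow_neg_atTop hβp).comp ((tendsto_pow_atTop_atTop_of_one_lt
      (one_lt_two (α := ℝ))).atTop_mul_const ht)).const_mul (C₀ ^ (1 / p))).mul_const
      (eLpNorm g (ENNReal.ofReal p) μ).toReal
  have hgeom := dist_le_of_le_geometric_of_tendsto₀ _ (C₀ ^ (1 / p) * t ^ (α - β / p) * M) hr
    (fun n => ?_) hlim
  · convert hgeom using 1
    · simp
    · ring
  · calc dist (heatOp μ K (2 ^ n * t) g x) (heatOp μ K (2 ^ (n + 1) * t) g x)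
        ≤ C₀ ^ (1 / p) * (2 ^ n * t) ^ (α - β / p) * M := by
          rw [Real.dist_eq, pow_succ, mul_comm _ 2, mul_assoc]
          exact hxdiff n
      _ = C₀ ^ (1 / p) * t ^ (α - β / p) * M * (2 ^ (α - β / p)) ^ n := by
          rw [Real.mul_rpow (by positivity) ht.le, ← Real.rpow_pow_comm zero_le_two]
          ring

lemma meas_le_of_abs_heatOp_le [SFinite μ] (hK : IsHeatKernel μ K) (hp : 1 ≤ p)
    (ht : 0 < t) (hs : 0 < s) (hg : Measurable g)
    (hint : ∀ᵐ x ∂μ, Integrable (fun y => K t x y * g y) μ) (hM0 : 0 ≤ M)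
    (hM : besovSeminorm μ K p α g ≤ ENNReal.ofReal M)
    (hPt : ∀ᵐ x ∂μ, |heatOp μ K t g x| ≤ s / 2) :
    μ {x | s ≤ |g x|} ≤ ENNReal.ofReal ((t ^ α * M / (s / 2)) ^ p) := by
  have hp0 : 0 < p := by linarith
  have hsub : {x | s ≤ |g x|} ≤ᵐ[μ]
      {x | ENNReal.ofReal (s / 2) ≤ ‖(g - heatOp μ K t g) x‖ₑ} := by
    filter_upwards [hPt] with x hx (hgx : s ≤ |g x|)
    change ENNReal.ofReal (s / 2) ≤ ‖g x - heatOp μ K t g x‖ₑ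
    rw [Real.enorm_eq_ofReal_abs]
    exact ofReal_le_ofReal (by linarith [abs_sub_abs_le_abs_sub (g x) (heatOp μ K t g x)])
  calc μ {x | s ≤ |g x|}
      ≤ (ENNReal.ofReal (s / 2))⁻¹ ^ p *
          eLpNorm (g - heatOp μ K t g) (ENNReal.ofReal p) μ ^ p := by
        have hChebyshev := meas_ge_le_mul_pow_eLpNorm_enorm μ (by simpa using hp0) ofReal_ne_top
          (hg.sub (measurable_heatOp hK hg t)).aestronglyMeasurable (ε := ENNReal.ofReal (s / 2))
          (ofReal_pos.2 (by positivity)).ne' (by simp)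
        rw [toReal_ofReal hp0.le] at hChebyshev
        exact (measure_mono_ae hsub).trans hChebyshev
    _ ≤ (ENNReal.ofReal (s / 2))⁻¹ ^ p * (ENNReal.ofReal (t ^ α) * ENNReal.ofReal M) ^ p := by
        gcongr
        exact ((eLpNorm_sub_heatOp_le hK hp ht hg hint).trans (besovEnergy_rpow_le ht)).trans
          (by gcongr)
    _ = ENNReal.ofReal ((t ^ α * M / (s / 2)) ^ p) := by
        rw [← ofReal_inv_of_pos (by positivity), ← ofReal_mul (by positivity),
          ← ENNReal.mul_rpow_of_nonneg _ _ hp0.le, ← ofReal_mul (by positivity),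
          ofReal_rpow_of_nonneg (by positivity) hp0.le, inv_mul_eq_div]

lemma weak_type_le_of_besovSeminorm_le [SFinite μ] (hK : IsHeatKernel μ K)
    (hU : Ultracontractive μ K C₀ β) (hC₀ : 0 < C₀) (hp : 1 ≤ p) (hβ : 0 < β) (hpα : p * α < β)
    (hg : Measurable g) (hgLp : MemLp g (ENNReal.ofReal p) μ) (hM0 : 0 < M)
    (hM : besovSeminorm μ K p α g ≤ ENNReal.ofReal M) (hs : 0 < s) :
    ENNReal.ofReal s * μ {x | s ≤ |g x|} ^ (1 / (p * β / (β - p * α))) ≤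
      ENNReal.ofReal (2 * (C₀ ^ (1 / p) / (1 - 2 ^ (α - β / p))) ^ (p * α / β) * M) := by
  have hp0 : 0 < p := by linarith
  have hr := two_rpow_sub_div_lt_one hp0 hpα
  refine ofReal_mul_rpow_le_of_forall_le hp0 hβ hpα (div_pos (by positivity) (by linarith)) hM0
    hs fun t ht hcond => ?_
  refine meas_le_of_abs_heatOp_le hK hp ht hs hg (ae_integrable_kernel_mul hK hU hC₀.le hp ht hgLp)
    hM0.le hM ?_
  filter_upwards [abs_heatOp_le_of_besovSeminorm_le hK hU hC₀.le hp hβ hpα ht hg hgLp hM0.le hM]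
    with x hx using hx.trans hcond

end WeakType

theorem weak_sobolev_general (p α β C₀ : ℝ)
    (hα : 0 < α) (hp : 1 ≤ p) (hpβ : p < β / α) (hC₀ : 0 < C₀) :
    ∃ C : ℝ, 0 < C ∧
      ∀ (X : Type) [MetricSpace X] [MeasurableSpace X] [BorelSpace X]
        (μ : Measure X) [SigmaFinite μ] (K : ℝ → X → X → ℝ),
        IsHeatKernel μ K → Ultracontractive μ K C₀ β →
        ∀ f : X → ℝ, MemBesov μ K p α f →
        ∀ s : ℝ, 0 < s →
          ENNReal.ofReal s * μ {x | s ≤ |f x|} ^ (1 / (p * β / (β - p * α))) ≤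
            ENNReal.ofReal C * besovSeminorm μ K p α f := by
  have hpα : p * α < β := (lt_div_iff₀ hα).1 hpβ
  have hβ : 0 < β := (mul_pos (by linarith) hα).trans hpα
  have hr := two_rpow_sub_div_lt_one (by linarith) hpα
  set C := 2 * (C₀ ^ (1 / p) / (1 - 2 ^ (α - β / p))) ^ (p * α / β)
  have hC : 0 < C := by
    have : 0 < 1 - (2 : ℝ) ^ (α - β / p) := by linarith
    positivity
  refine ⟨C, hC, fun X _ _ _ μ _ K hK hU f ⟨hfLp, hfN⟩ s hs => ?_⟩
  obtain ⟨g, hg, hfg⟩ := hfLp.1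
  have hlevel : {x | s ≤ |f x|} =ᵐ[μ] {x | s ≤ |g x|} := hfg.fun_comp fun y => s ≤ |y|
  rw [besovSeminorm_congr_ae hfg] at hfN ⊢
  rw [measure_congr hlevel]
  refine ENNReal.le_of_forall_pos_le_add fun ε hε _ => ?_
  have hεC : (0 : ℝ) < ε / C := by positivity
  calc ENNReal.ofReal s * μ {x | s ≤ |g x|} ^ (1 / (p * β / (β - p * α)))
      ≤ ENNReal.ofReal (C * ((besovSeminorm μ K p α g).toReal + ε / C)) :=
        weak_type_le_of_besovSeminorm_le hK hU hC₀ hp hβ hpα hg.measurable (hfLp.ae_eq hfg)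
          (by positivity) ((le_ofReal_iff_toReal_le hfN (by positivity)).2 (by linarith)) hs
    _ = ENNReal.ofReal C * besovSeminorm μ K p α g + ε := by
        rw [mul_add, mul_div_cancel₀ _ hC.ne', ofReal_add (by positivity) ε.coe_nonneg,
          ofReal_mul hC.le, ofReal_toReal hfN, ofReal_coe_nnreal]

/-- **Weak-type Sobolev inequality.** Under the ultracontractive bound, for `0 < α < β`,
`1 ≤ p < β/α` and `q = pβ/(β−pα)`, every `f ∈ B^{p,α}(X)` satisfies
`sup_{s>0} s μ({|f| ≥ s})^{1/q} ≤ C ‖f‖_{p,α}`, the constant depending only on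
`p, α, β, C₀`. -/
theorem weak_sobolev (p α β C₀ : ℝ)
    (hα : 0 < α) (hαβ : α < β) (hp : 1 ≤ p) (hpβ : p < β / α) (hC₀ : 0 < C₀) :
    ∃ C : ℝ, 0 < C ∧
      ∀ (X : Type) [MetricSpace X] [MeasurableSpace X] [BorelSpace X]
        (μ : Measure X) [SigmaFinite μ] (K : ℝ → X → X → ℝ),
        IsHeatKernel μ K → Ultracontractive μ K C₀ β →
        ∀ f : X → ℝ, MemBesov μ K p α f →
        ∀ s : ℝ, 0 < s →
          ENNReal.ofReal s * μ {x | s ≤ |f x|} ^ (1 / (p * β / (β - p * α))) ≤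
            ENNReal.ofReal C * besovSeminorm μ K p α f :=
  weak_sobolev_general p α β C₀ hα hp hpβ hC₀

end BesovDirichlet
end
end

section
/- Assume the two-sided Gaussian bounds, the ball-positivity assumption and the volume-ratio bounds. Then for every 1 ≤ p < ∞ and every 0 ≤ α < ∞ there exist constants c, C > 0 such that every u ∈ L^p(X,μ) satisfies c · sup_{t>0} ( ∫_X ∫_{B(x,t)} |u(y) − u(x)|^p / (t^{αp} μ(B(x,t))) dμ(y) dμ(x) )^{1/p} ≤ ‖u‖_{p,α/2} ≤ C · sup_{t>0} ( ∫_X ∫_{B(x,t)} |u(y) − u(x)|^p / (t^{αp} μ(B(x,t))) dμ(y) dμ(x) )^{1/p}; in particular B^{p,α/2}(X) coincides with the metric Besov space B^{α}_{p,∞}(X) = { u ∈ L^p(X,μ) : sup_{t>0} ( ∫_X ∫_{B(x,t)} |u(y) − u(x)|^p / (t^{αp} μ(B(x,t))) dμ(y) dμ(x) )^{1/p} < ∞ }, with comparable seminorms. -/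
/-!
Both estimates compare the heat kernel at time `t = r²` with normalized indicators of balls.
Near the diagonal, `d(x,y) < r`, the Gaussian lower bound and the comparability of `μ(B(y,r))`
with `μ(B(x,r))` give `p_{r²}(x,y) ≥ c / μ(B(x,r))`, so the heat energy at time `r²` dominates the
ball energy `∫_X ⨍_{B(x,r)} |u(x) - u(y)|^p` at radius `r`. On the annulus `jr ≤ d(x,y) < (j+1)r`
the Gaussian upper bound and the lower volume-ratio bound give
`p_{r²}(x,y) ≲ e^{-k j²} (j+1)^S / μ(B(x,(j+1)r))`, so the heat energy is at most
`∑_j e^{-k j²} (j+1)^S` times the ball energies at radii `(j+1)r`, each controlled by the metric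
seminorm; the Gaussian factor makes the resulting series `∑_j e^{-k j²} (j+1)^{S+αp}` converge.
The lower volume-ratio bound also makes balls totally bounded, hence `X` second countable, which
gives the measurability needed to exchange these sums with the integrals.
-/

open MeasureTheory ENNReal Metric Filter

noncomputable section

namespace BesovDirichlet

variable {X : Type*} [MeasurableSpace X]

/-- The metric Besov quantity
`sup_{t>0} (∫_X ∫_{B(x,t)} |u(y)−u(x)|^p / (t^{αp} μ(B(x,t))) dμ(y) dμ(x))^{1/p}`. -/
def metricBesovQ [PseudoMetricSpace X] (μ : Measure X) (p α : ℝ) (u : X → ℝ) : ℝ≥0∞ :=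
  ⨆ (t : ℝ) (_ : 0 < t),
    (∫⁻ x, (∫⁻ y in Metric.ball x t,
        ENNReal.ofReal (|u y - u x| ^ p) /
          (ENNReal.ofReal (t ^ (α * p)) * μ (Metric.ball x t)) ∂μ) ∂μ) ^ (1 / p)

lemma _root_.Real.summable_exp_neg_mul_sq_mul_rpow {k : ℝ} (hk : 0 < k) (β : ℝ) :
    Summable fun j : ℕ => Real.exp (-k * (j : ℝ) ^ 2) * ((j : ℝ) + 1) ^ β := by
  have hshift : Summable fun j : ℕ => ((j : ℝ) + 1) ^ ⌈β⌉₊ * Real.exp (-k * ((j : ℝ) + 1)) := by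
    simpa using (summable_nat_add_iff 1).mpr (Real.summable_pow_mul_exp_neg_nat_mul ⌈β⌉₊ hk)
  refine (hshift.mul_left (Real.exp k)).of_nonneg_of_le (fun j => by positivity) fun j => ?_
  have hj : (j : ℝ) ≤ (j : ℝ) ^ 2 := by exact_mod_cast Nat.le_self_pow two_ne_zero j
  calc Real.exp (-k * (j : ℝ) ^ 2) * ((j : ℝ) + 1) ^ β
      ≤ Real.exp (k + -k * ((j : ℝ) + 1)) * ((j : ℝ) + 1) ^ ⌈β⌉₊ := by
        gcongr
        · nlinarith
        · rw [← Real.rpow_natCast]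
          exact Real.rpow_le_rpow_of_exponent_le (by linarith [j.cast_nonneg (α := ℝ)])
            (Nat.le_ceil β)
    _ = Real.exp k * (((j : ℝ) + 1) ^ ⌈β⌉₊ * Real.exp (-k * ((j : ℝ) + 1))) := by
        rw [Real.exp_add]; ring

lemma ne_top_iff_ne_top_of_le_of_le {a b : ℝ≥0∞} {c C : ℝ} (hc : 0 < c)
    (hab : ENNReal.ofReal c * a ≤ b) (hba : b ≤ ENNReal.ofReal C * a) : b ≠ ∞ ↔ a ≠ ∞ := by
  refine ⟨fun hb ha => hb (top_le_iff.mp ?_), fun ha => ne_top_of_le_ne_top (by finiteness) hba⟩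
  rwa [ha, ENNReal.mul_top (ENNReal.ofReal_pos.mpr hc).ne'] at hab

lemma ofReal_inv_rpow_mul_rpow_one_div {r p : ℝ} (hr : 0 < r) (hp : 0 < p) (α : ℝ) :
    (ENNReal.ofReal (r ^ (α * p)))⁻¹ ^ (1 / p) = ENNReal.ofReal ((r ^ 2) ^ (-(α / 2))) := by
  rw [ENNReal.inv_rpow, ENNReal.ofReal_rpow_of_pos (by positivity), ← Real.rpow_mul hr.le,
    ← ENNReal.ofReal_inv_of_pos (by positivity), ← Real.rpow_neg hr.le,
    ← Real.rpow_natCast, ← Real.rpow_mul hr.le]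
  congr 2
  field_simp
  push_cast
  ring

section Metric

variable [PseudoMetricSpace X] {μ : Measure X}

def ballEnergy (μ : Measure X) (p r : ℝ) (u : X → ℝ) : ℝ≥0∞ :=
  ∫⁻ x, ⨍⁻ y in ball x r, ENNReal.ofReal (|u x - u y| ^ p) ∂μ ∂μ

lemma metricBesovQ_eq_iSup_ballEnergy (p α : ℝ) (u : X → ℝ) :
    metricBesovQ μ p α u =
      ⨆ (r : ℝ) (_ : 0 < r), ((ENNReal.ofReal (r ^ (α * p)))⁻¹ * ballEnergy μ p r u) ^ (1 / p) := by
  refine iSup_congr fun r => iSup_congr fun hr => ?_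
  have hc : ENNReal.ofReal (r ^ (α * p)) ≠ 0 := (ENNReal.ofReal_pos.mpr (by positivity)).ne'
  rw [ballEnergy, ← lintegral_const_mul' _ _ (ENNReal.inv_ne_top.mpr hc)]
  congr 2 with x
  rcases eq_or_ne (μ (ball x r)) 0 with h0 | h0
  · simp [Measure.restrict_eq_zero.mpr h0]
  rw [setLAverage_eq, ENNReal.div_eq_inv_mul,
    ← lintegral_const_mul' _ _ (ENNReal.inv_ne_top.mpr h0),
    ← lintegral_const_mul' _ _ (ENNReal.inv_ne_top.mpr hc)]
  congr 1 with y
  rw [ENNReal.div_eq_inv_mul, ENNReal.mul_inv (Or.inl hc) (Or.inl ENNReal.ofReal_ne_top),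
    abs_sub_comm]
  ring

lemma ballEnergy_le_metricBesovQ {p r : ℝ} (hp : 0 < p) (hr : 0 < r) (α : ℝ) (u : X → ℝ) :
    ballEnergy μ p r u ≤ ENNReal.ofReal (r ^ (α * p)) * metricBesovQ μ p α u ^ p := by
  have hc : ENNReal.ofReal (r ^ (α * p)) ≠ 0 := (ENNReal.ofReal_pos.mpr (by positivity)).ne'
  have h := (metricBesovQ_eq_iSup_ballEnergy (μ := μ) p α u).ge
  rw [one_div] at h
  rw [← ENNReal.inv_mul_le_iff hc ENNReal.ofReal_ne_top, ← ENNReal.rpow_inv_le_iff hp]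
  exact le_trans (le_iSup₂_of_le r hr le_rfl) h

lemma ballEnergy_congr_ae {p r : ℝ} {u v : X → ℝ} (h : u =ᵐ[μ] v) :
    ballEnergy μ p r u = ballEnergy μ p r v := by
  refine lintegral_congr_ae ?_
  filter_upwards [h] with x hx
  refine laverage_congr ?_
  filter_upwards [ae_restrict_of_ae h] with y hy
  rw [hx, hy]

lemma metricBesovQ_congr_ae {p α : ℝ} {u v : X → ℝ} (h : u =ᵐ[μ] v) :
    metricBesovQ μ p α u = metricBesovQ μ p α v := by
  simp_rw [metricBesovQ_eq_iSup_ballEnergy, ballEnergy_congr_ae h]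

end Metric

lemma besovEnergy_congr_ae {μ : Measure X} {K : ℝ → X → X → ℝ} {p t : ℝ} {u v : X → ℝ}
    (h : u =ᵐ[μ] v) : besovEnergy μ K p t u = besovEnergy μ K p t v := by
  refine lintegral_congr_ae ?_
  filter_upwards [h] with x hx
  refine lintegral_congr_ae ?_
  filter_upwards [h] with y hy
  rw [hx, hy]

lemma besovSeminorm_congr_ae_s10 {μ : Measure X} {K : ℝ → X → X → ℝ} {p α : ℝ} {u v : X → ℝ}
    (h : u =ᵐ[μ] v) : besovSeminorm μ K p α u = besovSeminorm μ K p α v := by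
  simp_rw [besovSeminorm, besovEnergy_congr_ae h]

section KernelBounds

variable [PseudoMetricSpace X] {μ : Measure X} {K : ℝ → X → X → ℝ}

def NearDiagonalLowerBound (μ : Measure X) (K : ℝ → X → X → ℝ) (c : ℝ) : Prop :=
  ∀ r > 0, ∀ᵐ xy ∂μ.prod μ, xy.2 ∈ ball xy.1 r →
    ENNReal.ofReal c / μ (ball xy.1 r) ≤ ENNReal.ofReal (K (r ^ 2) xy.1 xy.2)

def AnnularUpperBound (μ : Measure X) (K : ℝ → X → X → ℝ) (a : ℕ → ℝ) : Prop :=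
  ∀ r > 0, ∀ᵐ xy ∂μ.prod μ, ∀ j : ℕ, j * r ≤ dist xy.1 xy.2 → dist xy.1 xy.2 < (j + 1) * r →
    ENNReal.ofReal (K (r ^ 2) xy.1 xy.2) ≤ ENNReal.ofReal (a j) / μ (ball xy.1 ((j + 1) * r))

lemma AnnularUpperBound.ae_le_tsum_indicator {a : ℕ → ℝ} {r : ℝ} (hK : AnnularUpperBound μ K a)
    (hr : 0 < r) :
    ∀ᵐ xy ∂μ.prod μ, ENNReal.ofReal (K (r ^ 2) xy.1 xy.2) ≤
      ∑' j : ℕ, (ball xy.1 ((j + 1) * r)).indicator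
        (fun _ => ENNReal.ofReal (a j) / μ (ball xy.1 ((j + 1) * r))) xy.2 := by
  filter_upwards [hK r hr] with xy hxy
  set j := ⌊dist xy.1 xy.2 / r⌋₊
  have hlo : j * r ≤ dist xy.1 xy.2 := (le_div_iff₀ hr).mp (Nat.floor_le (by positivity))
  have hhi : dist xy.1 xy.2 < (j + 1) * r := (div_lt_iff₀ hr).mp (Nat.lt_floor_add_one _)
  refine (hxy j hlo hhi).trans (le_of_eq_of_le ?_ (ENNReal.le_tsum j))
  rw [Set.indicator_of_mem (mem_ball'.mpr hhi)]

end KernelBounds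

section Lower

variable [PseudoMetricSpace X] [OpensMeasurableSpace X] {μ : Measure X} [SFinite μ]
  {K : ℝ → X → X → ℝ}

lemma ofReal_mul_ballEnergy_le_besovEnergy {c r : ℝ} (hK : NearDiagonalLowerBound μ K c)
    (hr : 0 < r) (p : ℝ) (u : X → ℝ) :
    ENNReal.ofReal c * ballEnergy μ p r u ≤ besovEnergy μ K p (r ^ 2) u := by
  refine (lintegral_const_mul_le _ _).trans (lintegral_mono_ae ?_)
  filter_upwards [Measure.ae_ae_of_ae_prod (hK r hr)] with x hx
  have hxB := (ae_restrict_iff' measurableSet_ball).mpr hx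
  calc ENNReal.ofReal c * ⨍⁻ y in ball x r, ENNReal.ofReal (|u x - u y| ^ p) ∂μ
      = (∫⁻ y in ball x r, ENNReal.ofReal (|u x - u y| ^ p) ∂μ) *
          (ENNReal.ofReal c / μ (ball x r)) := by
        rw [setLAverage_eq, ENNReal.div_eq_inv_mul, ENNReal.div_eq_inv_mul]; ring
    _ ≤ ∫⁻ y in ball x r, ENNReal.ofReal (|u x - u y| ^ p) * (ENNReal.ofReal c / μ (ball x r)) ∂μ :=
        lintegral_mul_const_le _ _
    _ ≤ ∫⁻ y in ball x r, ENNReal.ofReal (|u x - u y| ^ p) * ENNReal.ofReal (K (r ^ 2) x y) ∂μ :=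
        lintegral_mono_ae (hxB.mono fun y hy => by gcongr)
    _ ≤ ∫⁻ y, ENNReal.ofReal (|u x - u y| ^ p) * ENNReal.ofReal (K (r ^ 2) x y) ∂μ :=
        setLIntegral_le_lintegral _ _

lemma NearDiagonalLowerBound.ofReal_rpow_mul_metricBesovQ_le {c p : ℝ}
    (hK : NearDiagonalLowerBound μ K c) (hc : 0 ≤ c) (hp : 0 < p) (α : ℝ) (u : X → ℝ) :
    ENNReal.ofReal (c ^ (1 / p)) * metricBesovQ μ p α u ≤ besovSeminorm μ K p (α / 2) u := by
  rw [metricBesovQ_eq_iSup_ballEnergy, ENNReal.mul_iSup]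
  refine iSup_le fun r => ?_
  rw [ENNReal.mul_iSup]
  refine iSup_le fun hr => ?_
  calc ENNReal.ofReal (c ^ (1 / p)) *
        ((ENNReal.ofReal (r ^ (α * p)))⁻¹ * ballEnergy μ p r u) ^ (1 / p)
      = ENNReal.ofReal ((r ^ 2) ^ (-(α / 2))) *
          (ENNReal.ofReal c * ballEnergy μ p r u) ^ (1 / p) := by
        rw [ENNReal.mul_rpow_of_nonneg _ _ (by positivity), ofReal_inv_rpow_mul_rpow_one_div hr hp,
          ENNReal.mul_rpow_of_nonneg _ _ (by positivity),
          ENNReal.ofReal_rpow_of_nonneg hc (by positivity)]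
        ring
    _ ≤ ENNReal.ofReal ((r ^ 2) ^ (-(α / 2))) * besovEnergy μ K p (r ^ 2) u ^ (1 / p) := by
        gcongr
        exact ofReal_mul_ballEnergy_le_besovEnergy hK hr p u
    _ ≤ besovSeminorm μ K p (α / 2) u :=
        le_iSup₂_of_le (f := fun t (_ : 0 < t) =>
          ENNReal.ofReal (t ^ (-(α / 2))) * besovEnergy μ K p t u ^ (1 / p)) (r ^ 2)
          (by positivity) le_rfl

end Lower

section Upper

variable [PseudoMetricSpace X] [OpensMeasurableSpace X] [SecondCountableTopology X]
  {μ : Measure X} [SFinite μ] {K : ℝ → X → X → ℝ}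

lemma measurable_setLAverage_ball {g : X × X → ℝ≥0∞} (hg : Measurable g) (r : ℝ) :
    Measurable fun x => ⨍⁻ y in ball x r, g (x, y) ∂μ := by
  have hS : MeasurableSet {z : X × X | dist z.2 z.1 < r} :=
    measurableSet_lt (measurable_snd.dist measurable_fst) measurable_const
  simp_rw [setLAverage_eq, ← lintegral_indicator measurableSet_ball]
  exact ((hg.indicator hS).lintegral_prod_right').div (measurable_measure_prodMk_left hS)

lemma besovEnergy_le_tsum_mul_ballEnergy {a : ℕ → ℝ} {r : ℝ} (hK : AnnularUpperBound μ K a)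
    (hr : 0 < r) (p : ℝ) {u : X → ℝ} (hu : Measurable u) :
    besovEnergy μ K p (r ^ 2) u ≤
      ∑' j : ℕ, ENNReal.ofReal (a j) * ballEnergy μ p ((j + 1) * r) u := by
  set g : X × X → ℝ≥0∞ := fun z => ENNReal.ofReal (|u z.1 - u z.2| ^ p)
  have hg : Measurable g := by fun_prop
  have hinner : ∀ᵐ x ∂μ, ∫⁻ y, g (x, y) * ENNReal.ofReal (K (r ^ 2) x y) ∂μ ≤
      ∑' j : ℕ, ENNReal.ofReal (a j) * ⨍⁻ y in ball x ((j + 1) * r), g (x, y) ∂μ := by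
    filter_upwards [Measure.ae_ae_of_ae_prod (hK.ae_le_tsum_indicator hr)] with x hx
    calc ∫⁻ y, g (x, y) * ENNReal.ofReal (K (r ^ 2) x y) ∂μ
        ≤ ∫⁻ y, ∑' j : ℕ, (ball x ((j + 1) * r)).indicator
            (fun y => g (x, y) * (ENNReal.ofReal (a j) / μ (ball x ((j + 1) * r)))) y ∂μ := by
          refine lintegral_mono_ae (hx.mono fun y hy => ?_)
          simp_rw [Set.indicator_mul_right _ (fun y => g (x, y)), ENNReal.tsum_mul_left]
          gcongr
      _ = ∑' j : ℕ, ENNReal.ofReal (a j) * ⨍⁻ y in ball x ((j + 1) * r), g (x, y) ∂μ := by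
          rw [lintegral_tsum fun j => by measurability]
          congr 1 with j
          rw [lintegral_indicator measurableSet_ball,
            lintegral_mul_const (f := fun y => g (x, y)) _ (hg.comp measurable_prodMk_left),
            setLAverage_eq,
            ENNReal.div_eq_inv_mul, ENNReal.div_eq_inv_mul]
          ring
  calc besovEnergy μ K p (r ^ 2) u
      ≤ ∫⁻ x, ∑' j : ℕ, ENNReal.ofReal (a j) * ⨍⁻ y in ball x ((j + 1) * r), g (x, y) ∂μ ∂μ :=
        lintegral_mono_ae hinner
    _ = ∑' j : ℕ, ENNReal.ofReal (a j) * ballEnergy μ p ((j + 1) * r) u := by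
        rw [lintegral_tsum fun j =>
          ((measurable_setLAverage_ball hg _).const_mul _).aemeasurable]
        congr 1 with j
        exact lintegral_const_mul _ (measurable_setLAverage_ball hg _)

lemma AnnularUpperBound.besovSeminorm_le {a : ℕ → ℝ} {p : ℝ} (hK : AnnularUpperBound μ K a)
    (ha : ∀ j, 0 ≤ a j) (hp : 0 < p) {α : ℝ}
    (hsum : Summable fun j : ℕ => a j * ((j : ℝ) + 1) ^ (α * p)) {u : X → ℝ} (hu : Measurable u) :
    besovSeminorm μ K p (α / 2) u ≤
      ENNReal.ofReal ((∑' j : ℕ, a j * ((j : ℝ) + 1) ^ (α * p)) ^ (1 / p)) *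
        metricBesovQ μ p α u := by
  set A := ∑' j : ℕ, a j * ((j : ℝ) + 1) ^ (α * p)
  set M := metricBesovQ μ p α u
  refine iSup₂_le fun t ht => ?_
  obtain ⟨r, hr, rfl⟩ : ∃ r > 0, r ^ 2 = t := ⟨√t, Real.sqrt_pos.mpr ht, Real.sq_sqrt ht.le⟩
  have hc : ENNReal.ofReal (r ^ (α * p)) ≠ 0 := (ENNReal.ofReal_pos.mpr (by positivity)).ne'
  have henergy : besovEnergy μ K p (r ^ 2) u ≤
      ENNReal.ofReal (r ^ (α * p)) * (ENNReal.ofReal A * M ^ p) :=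
    calc besovEnergy μ K p (r ^ 2) u
        ≤ ∑' j : ℕ, ENNReal.ofReal (a j) * ballEnergy μ p ((j + 1) * r) u :=
          besovEnergy_le_tsum_mul_ballEnergy hK hr p hu
      _ ≤ ∑' j : ℕ, ENNReal.ofReal (a j) * (ENNReal.ofReal (((j + 1) * r) ^ (α * p)) * M ^ p) := by
          gcongr with j
          exact ballEnergy_le_metricBesovQ hp (by positivity) α u
      _ = ∑' j : ℕ, ENNReal.ofReal (a j * ((j : ℝ) + 1) ^ (α * p)) *
            (ENNReal.ofReal (r ^ (α * p)) * M ^ p) := by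
          congr 1 with j
          rw [Real.mul_rpow (by positivity) hr.le, ENNReal.ofReal_mul (ha j),
            ENNReal.ofReal_mul (by positivity)]
          ring
      _ = ENNReal.ofReal (r ^ (α * p)) * (ENNReal.ofReal A * M ^ p) := by
          rw [ENNReal.tsum_mul_right,
            ← ENNReal.ofReal_tsum_of_nonneg (fun j => by have := ha j; positivity) hsum]
          ring
  calc ENNReal.ofReal ((r ^ 2) ^ (-(α / 2))) * besovEnergy μ K p (r ^ 2) u ^ (1 / p)
      ≤ ENNReal.ofReal ((r ^ 2) ^ (-(α / 2))) *
          (ENNReal.ofReal (r ^ (α * p)) * (ENNReal.ofReal A * M ^ p)) ^ (1 / p) := by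
        gcongr
    _ = ENNReal.ofReal (A ^ (1 / p)) * M := by
        rw [← ofReal_inv_rpow_mul_rpow_one_div hr hp,
          ← ENNReal.mul_rpow_of_nonneg _ _ (by positivity), ← mul_assoc, ENNReal.inv_mul_cancel hc ENNReal.ofReal_ne_top, one_mul,
          ENNReal.mul_rpow_of_nonneg _ _ (by positivity), ← ENNReal.rpow_mul,
          mul_one_div_cancel hp.ne', ENNReal.rpow_one,
          ENNReal.ofReal_rpow_of_nonneg (tsum_nonneg fun j => by have := ha j; positivity)
            (by positivity)]

end Upper

lemma secondCountableTopology_of_totallyBounded_ball {Y : Type*} [PseudoMetricSpace Y]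
    (h : ∀ (x : Y) (r : ℝ), 0 < r → TotallyBounded (ball x r)) : SecondCountableTopology Y := by
  have : TopologicalSpace.SeparableSpace Y := by
    rcases isEmpty_or_nonempty Y with _ | ⟨⟨x₀⟩⟩
    · infer_instance
    rw [← TopologicalSpace.isSeparable_univ_iff, ← iUnion_ball_nat_succ x₀]
    exact .iUnion fun n => (h x₀ _ n.cast_add_one_pos).isSeparable
  exact UniformSpace.secondCountable_of_separable Y

section Separability

variable [PseudoMetricSpace X] [OpensMeasurableSpace X] {μ : Measure X}

/- Otherwise a greedy `ε`-separated sequence in `s` gives infinitely many disjoint balls of measure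
at least `δ` inside `U`. -/
lemma totallyBounded_of_forall_le_measure_ball {s : Set X}
    (h : ∀ ε > 0, ∃ δ ≠ 0, ∃ U, μ U ≠ ∞ ∧ ∀ x ∈ s, δ ≤ μ (ball x ε) ∧ ball x ε ⊆ U) :
    TotallyBounded s := by
  rw [Metric.totallyBounded_iff]
  intro ε hε
  by_contra! hcover
  obtain ⟨w, hw⟩ := Set.seq_of_forall_finite_exists
    (P := fun z t => z ∈ s ∧ ∀ y ∈ t, ε ≤ dist z y) fun t ht => by
      obtain ⟨z, hzs, hz⟩ := Set.not_subset.mp (hcover t ht)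
      exact ⟨z, hzs, fun y hy => not_lt.mp fun hzy => hz (Set.mem_biUnion hy (mem_ball.mpr hzy))⟩
  obtain ⟨δ, hδ, U, hU, hball⟩ := h (ε / 2) (by positivity)
  have hdisj : Pairwise (Function.onFun Disjoint fun n => ball (w n) (ε / 2)) := by
    intro m n hmn
    refine ball_disjoint_ball ?_
    rcases hmn.lt_or_gt with hlt | hlt
    · linarith [dist_comm (w m) (w n), (hw n).2 (w m) ⟨m, hlt, rfl⟩]
    · linarith [(hw m).2 (w n) ⟨n, hlt, rfl⟩]
  have hsum : ∑' _ : ℕ, δ ≤ μ U :=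
    calc ∑' _ : ℕ, δ ≤ ∑' n, μ (ball (w n) (ε / 2)) :=
          ENNReal.tsum_le_tsum fun n => (hball (w n) (hw n).1).1
      _ ≤ μ (⋃ n, ball (w n) (ε / 2)) :=
          tsum_meas_le_meas_iUnion_of_disjoint μ (fun _ => measurableSet_ball) hdisj
      _ ≤ μ U := measure_mono (Set.iUnion_subset fun n => (hball (w n) (hw n).1).2)
  rw [ENNReal.tsum_const_eq_top_of_ne_zero hδ] at hsum
  exact hU (top_le_iff.mp hsum)

lemma totallyBounded_ball_of_measure_ball_ratio {S C : ℝ} (hC : 0 < C)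
    (hpos : ∀ (x : X) (r : ℝ), 0 < r → 0 < μ (ball x r) ∧ μ (ball x r) < ∞)
    (hvol : ∀ (x y : X) (r R : ℝ), 0 < r → r ≤ R → y ∈ ball x R →
      1 / C * (r / R) ^ S ≤ (μ (ball y r)).toReal / (μ (ball x R)).toReal)
    (x₀ : X) {R : ℝ} (hR : 0 < R) : TotallyBounded (ball x₀ R) := by
  refine totallyBounded_of_forall_le_measure_ball (μ := μ) fun ε hε => ?_
  have hV := hpos x₀ (R + ε) (by positivity)
  have hV₀ : 0 < (μ (ball x₀ (R + ε))).toReal := ENNReal.toReal_pos hV.1.ne' hV.2.ne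
  refine ⟨ENNReal.ofReal (1 / C * (ε / (R + ε)) ^ S * (μ (ball x₀ (R + ε))).toReal),
    (ENNReal.ofReal_pos.mpr (by positivity)).ne', ball x₀ (R + ε), hV.2.ne,
    fun x hx => ⟨?_, ball_subset_ball' (by linarith [mem_ball.mp hx])⟩⟩
  rw [← ENNReal.ofReal_toReal (hpos x ε hε).2.ne]
  refine ENNReal.ofReal_le_ofReal ?_
  have := hvol x₀ x ε (R + ε) hε (by linarith) (ball_subset_ball (by linarith) hx)
  rwa [le_div_iff₀ hV₀] at this

end Separability

lemma _root_.ENNReal.ofReal_div_toReal (c : ℝ) {m : ℝ≥0∞} (h0 : m ≠ 0) (htop : m ≠ ∞) :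
    ENNReal.ofReal (c / m.toReal) = ENNReal.ofReal c / m := by
  rw [ENNReal.ofReal_div_of_pos (ENNReal.toReal_pos h0 htop), ENNReal.ofReal_toReal htop]

lemma div_le_gaussian_of_dist_lt {C₁ C₂ k d r Vx Vy : ℝ} (hC₁ : 0 < C₁) (hk : 0 ≤ k)
    (hd : 0 ≤ d) (hdr : d < r) (hVx : 0 < Vx) (hVy : 0 < Vy) (hVxy : Vy ≤ C₂ * Vx) :
    Real.exp (-k) / (C₁ * √C₂) / Vx ≤ 1 / C₁ * Real.exp (-k * d ^ 2 / r ^ 2) / √(Vx * Vy) := by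
  have hC₂ : 0 < C₂ := by nlinarith
  have hsqrt : √(Vx * Vy) ≤ √C₂ * Vx :=
    calc √(Vx * Vy) ≤ √(C₂ * Vx ^ 2) := Real.sqrt_le_sqrt (by nlinarith)
      _ = √C₂ * Vx := by rw [Real.sqrt_mul hC₂.le, Real.sqrt_sq hVx.le]
  have hexp : Real.exp (-k) ≤ Real.exp (-k * d ^ 2 / r ^ 2) := by
    gcongr
    rw [le_div_iff₀ (by nlinarith)]
    nlinarith [mul_le_mul hdr.le hdr.le hd (hd.trans hdr.le)]
  calc Real.exp (-k) / (C₁ * √C₂) / Vx = 1 / C₁ * Real.exp (-k) / (√C₂ * Vx) := by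
        field_simp
    _ ≤ 1 / C₁ * Real.exp (-k * d ^ 2 / r ^ 2) / √(Vx * Vy) := by
        gcongr

lemma gaussian_le_div_of_le_dist {C₁ C₂ k d r S Vx Vy W : ℝ} {j : ℕ} (hC₁ : 0 ≤ C₁) (hC₂ : 0 < C₂)
    (hk : 0 ≤ k) (hr : 0 < r) (hjd : j * r ≤ d) (hW : 0 < W)
    (hVx : W / (C₂ * ((j : ℝ) + 1) ^ S) ≤ Vx) (hVy : W / (C₂ * ((j : ℝ) + 1) ^ S) ≤ Vy) :
    C₁ * Real.exp (-k * d ^ 2 / r ^ 2) / √(Vx * Vy) ≤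
      C₁ * C₂ * Real.exp (-k * (j : ℝ) ^ 2) * ((j : ℝ) + 1) ^ S / W := by
  set m := W / (C₂ * ((j : ℝ) + 1) ^ S)
  have hm : 0 < m := by positivity
  have hsqrt : m ≤ √(Vx * Vy) := by
    rw [← Real.sqrt_mul_self hm.le]
    exact Real.sqrt_le_sqrt (mul_le_mul hVx hVy hm.le (hm.le.trans hVx))
  have hexp : Real.exp (-k * d ^ 2 / r ^ 2) ≤ Real.exp (-k * (j : ℝ) ^ 2) := by
    gcongr
    rw [div_le_iff₀ (by positivity)]
    have hj : 0 ≤ (j : ℝ) * r := by positivity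
    nlinarith [mul_le_mul hjd hjd hj (hj.trans hjd)]
  calc C₁ * Real.exp (-k * d ^ 2 / r ^ 2) / √(Vx * Vy) ≤ C₁ * Real.exp (-k * (j : ℝ) ^ 2) / m := by
        gcongr
    _ = C₁ * C₂ * Real.exp (-k * (j : ℝ) ^ 2) * ((j : ℝ) + 1) ^ S / W := by
        simp only [m]
        field_simp

section Gaussian

variable [PseudoMetricSpace X] {μ : Measure X} {K : ℝ → X → X → ℝ}

lemma nearDiagonalLowerBound_of_gaussian {C₁ C₂ k₁ Q : ℝ} (hC₁ : 0 < C₁) (hk₁ : 0 ≤ k₁)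
    (hpos : ∀ (x : X) (r : ℝ), 0 < r → 0 < μ (ball x r) ∧ μ (ball x r) < ∞)
    (hvol : ∀ (x y : X) (r R : ℝ), 0 < r → r ≤ R → y ∈ ball x R →
      (μ (ball y r)).toReal / (μ (ball x R)).toReal ≤ C₂ * (r / R) ^ Q)
    (hGauss : ∀ t : ℝ, 0 < t → ∀ᵐ xy ∂(μ.prod μ),
      (1 / C₁) * Real.exp (-k₁ * dist xy.1 xy.2 ^ 2 / t) /
          Real.sqrt ((μ (ball xy.1 (Real.sqrt t))).toReal *
            (μ (ball xy.2 (Real.sqrt t))).toReal) ≤ K t xy.1 xy.2) :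
    NearDiagonalLowerBound μ K (Real.exp (-k₁) / (C₁ * √C₂)) := by
  intro r hr
  filter_upwards [hGauss (r ^ 2) (by positivity)] with ⟨x, y⟩ hxy hy
  rw [Real.sqrt_sq hr.le] at hxy
  have hVx := hpos x r hr
  have hVx₀ := ENNReal.toReal_pos hVx.1.ne' hVx.2.ne
  have hVy₀ := ENNReal.toReal_pos (hpos y r hr).1.ne' (hpos y r hr).2.ne
  have hratio := hvol x y r r hr le_rfl hy
  rw [div_self hr.ne', Real.one_rpow, mul_one, div_le_iff₀ hVx₀] at hratio
  rw [← ENNReal.ofReal_div_toReal _ hVx.1.ne' hVx.2.ne]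
  exact ENNReal.ofReal_le_ofReal <| (div_le_gaussian_of_dist_lt hC₁ hk₁ dist_nonneg
    (mem_ball'.mp hy) hVx₀ hVy₀ hratio).trans hxy

lemma annularUpperBound_of_gaussian {C₁ C₂ k₂ S : ℝ} (hC₁ : 0 ≤ C₁) (hC₂ : 0 < C₂) (hk₂ : 0 ≤ k₂)
    (hpos : ∀ (x : X) (r : ℝ), 0 < r → 0 < μ (ball x r) ∧ μ (ball x r) < ∞)
    (hvol : ∀ (x y : X) (r R : ℝ), 0 < r → r ≤ R → y ∈ ball x R →
      1 / C₂ * (r / R) ^ S ≤ (μ (ball y r)).toReal / (μ (ball x R)).toReal)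
    (hGauss : ∀ t : ℝ, 0 < t → ∀ᵐ xy ∂(μ.prod μ),
      K t xy.1 xy.2 ≤ C₁ * Real.exp (-k₂ * dist xy.1 xy.2 ^ 2 / t) /
          Real.sqrt ((μ (ball xy.1 (Real.sqrt t))).toReal *
            (μ (ball xy.2 (Real.sqrt t))).toReal)) :
    AnnularUpperBound μ K fun j => C₁ * C₂ * Real.exp (-k₂ * (j : ℝ) ^ 2) * ((j : ℝ) + 1) ^ S := by
  intro r hr
  filter_upwards [hGauss (r ^ 2) (by positivity)] with ⟨x, y⟩ hxy j hlo hhi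
  rw [Real.sqrt_sq hr.le] at hxy
  have hR : 0 < ((j : ℝ) + 1) * r := by positivity
  have hW := hpos x _ hR
  have hW₀ := ENNReal.toReal_pos hW.1.ne' hW.2.ne
  have hvolR : ∀ z ∈ ball x (((j : ℝ) + 1) * r), (μ (ball x (((j : ℝ) + 1) * r))).toReal /
      (C₂ * ((j : ℝ) + 1) ^ S) ≤ (μ (ball z r)).toReal := fun z hz => by
    have h := hvol x z r _ hr (le_mul_of_one_le_left hr.le (by simp)) hz
    rw [le_div_iff₀ hW₀, show r / (((j : ℝ) + 1) * r) = ((j : ℝ) + 1)⁻¹ by field_simp,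
      Real.inv_rpow (by positivity)] at h
    refine le_trans (le_of_eq ?_) h
    field_simp
  rw [← ENNReal.ofReal_div_toReal _ hW.1.ne' hW.2.ne]
  exact ENNReal.ofReal_le_ofReal <| hxy.trans <| gaussian_le_div_of_le_dist hC₁ hC₂ hk₂ hr hlo
    hW₀ (hvolR x (mem_ball_self hR)) (hvolR y (mem_ball'.mpr hhi))

end Gaussian

theorem metric_characterization_general
    {X : Type*} [MetricSpace X] [MeasurableSpace X] [BorelSpace X]
    (μ : Measure X) [SigmaFinite μ] (K : ℝ → X → X → ℝ)
    (C₁ k₁ k₂ : ℝ) (hC₁ : 1 ≤ C₁) (hk₁ : 0 < k₁) (hk₂ : 0 < k₂)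
    (hGauss : ∀ t : ℝ, 0 < t → ∀ᵐ xy ∂(μ.prod μ),
      (1 / C₁) * Real.exp (-k₁ * dist xy.1 xy.2 ^ 2 / t) /
          Real.sqrt ((μ (Metric.ball xy.1 (Real.sqrt t))).toReal *
            (μ (Metric.ball xy.2 (Real.sqrt t))).toReal) ≤ K t xy.1 xy.2 ∧
        K t xy.1 xy.2 ≤ C₁ * Real.exp (-k₂ * dist xy.1 xy.2 ^ 2 / t) /
          Real.sqrt ((μ (Metric.ball xy.1 (Real.sqrt t))).toReal *
            (μ (Metric.ball xy.2 (Real.sqrt t))).toReal))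
    (hpos : ∀ (x : X) (r : ℝ), 0 < r → 0 < μ (Metric.ball x r) ∧ μ (Metric.ball x r) < ∞)
    (Q S C₂ : ℝ) (hC₂ : 1 ≤ C₂)
    (hvol : ∀ (x y : X) (r R : ℝ), 0 < r → r ≤ R → y ∈ Metric.ball x R →
      (1 / C₂) * (r / R) ^ S ≤ (μ (Metric.ball y r)).toReal / (μ (Metric.ball x R)).toReal ∧
        (μ (Metric.ball y r)).toReal / (μ (Metric.ball x R)).toReal ≤ C₂ * (r / R) ^ Q)
    (p α : ℝ) (hp : 1 ≤ p) :
    ∃ c C : ℝ, 0 < c ∧ 0 < C ∧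
      ∀ u : X → ℝ, MemLp u (ENNReal.ofReal p) μ →
        (ENNReal.ofReal c * metricBesovQ μ p α u ≤ besovSeminorm μ K p (α / 2) u ∧
          besovSeminorm μ K p (α / 2) u ≤ ENNReal.ofReal C * metricBesovQ μ p α u) ∧
        (MemBesov μ K p (α / 2) u ↔ metricBesovQ μ p α u ≠ ∞) := by
  have hC₁₀ : 0 < C₁ := by linarith
  have hC₂₀ : 0 < C₂ := by linarith
  have hp₀ : 0 < p := by linarith
  have hvolL x y r R hr hrR hy := (hvol x y r R hr hrR hy).1
  have hvolU x y r R hr hrR hy := (hvol x y r R hr hrR hy).2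
  have : SecondCountableTopology X := secondCountableTopology_of_totallyBounded_ball
    fun x r hr => totallyBounded_ball_of_measure_ball_ratio hC₂₀ hpos hvolL x hr
  have hlower := nearDiagonalLowerBound_of_gaussian hC₁₀ hk₁.le hpos hvolU
    fun t ht => (hGauss t ht).mono fun _ h => h.1
  have hupper := annularUpperBound_of_gaussian hC₁₀.le hC₂₀ hk₂.le hpos hvolL
    fun t ht => (hGauss t ht).mono fun _ h => h.2
  set a : ℕ → ℝ := fun j => C₁ * C₂ * Real.exp (-k₂ * (j : ℝ) ^ 2) * ((j : ℝ) + 1) ^ S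
  have ha j : 0 ≤ a j := by positivity
  have hsum : Summable fun j : ℕ => a j * ((j : ℝ) + 1) ^ (α * p) :=
    ((Real.summable_exp_neg_mul_sq_mul_rpow hk₂ (S + α * p)).mul_left (C₁ * C₂)).congr fun j => by
      rw [Real.rpow_add (by positivity)]; ring
  have hA : 0 < ∑' j : ℕ, a j * ((j : ℝ) + 1) ^ (α * p) :=
    hsum.tsum_pos (fun j => by positivity) 0 (by positivity)
  refine ⟨(Real.exp (-k₁) / (C₁ * √C₂)) ^ (1 / p),
    (∑' j : ℕ, a j * ((j : ℝ) + 1) ^ (α * p)) ^ (1 / p), by positivity, by positivity,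
    fun u hu => ?_⟩
  obtain ⟨v, hv, huv⟩ : ∃ v, Measurable v ∧ u =ᵐ[μ] v :=
    ⟨_, hu.1.aemeasurable.measurable_mk, hu.1.aemeasurable.ae_eq_mk⟩
  have hlow := hlower.ofReal_rpow_mul_metricBesovQ_le (by positivity) hp₀ α v
  have hup := hupper.besovSeminorm_le ha hp₀ hsum hv
  rw [MemBesov, besovSeminorm_congr_ae_s10 huv, metricBesovQ_congr_ae huv]
  exact ⟨⟨hlow, hup⟩, (and_iff_right hu).trans
    (ne_top_iff_ne_top_of_le_of_le (by positivity) hlow hup)⟩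

/-- **Metric characterization of the Besov spaces** under two-sided Gaussian bounds,
positivity and finiteness of the measure of balls, and volume-ratio bounds:
`B^{p,α/2}(X) = B^α_{p,∞}(X)` with comparable seminorms. -/
theorem metric_characterization
    {X : Type*} [MetricSpace X] [MeasurableSpace X] [BorelSpace X]
    (μ : Measure X) [SigmaFinite μ] (K : ℝ → X → X → ℝ) (hK : IsHeatKernel μ K)
    (C₁ k₁ k₂ : ℝ) (hC₁ : 1 ≤ C₁) (hk₁ : 0 < k₁) (hk₂ : 0 < k₂)
    (hGauss : ∀ t : ℝ, 0 < t → ∀ᵐ xy ∂(μ.prod μ),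
      (1 / C₁) * Real.exp (-k₁ * dist xy.1 xy.2 ^ 2 / t) /
          Real.sqrt ((μ (Metric.ball xy.1 (Real.sqrt t))).toReal *
            (μ (Metric.ball xy.2 (Real.sqrt t))).toReal) ≤ K t xy.1 xy.2 ∧
        K t xy.1 xy.2 ≤ C₁ * Real.exp (-k₂ * dist xy.1 xy.2 ^ 2 / t) /
          Real.sqrt ((μ (Metric.ball xy.1 (Real.sqrt t))).toReal *
            (μ (Metric.ball xy.2 (Real.sqrt t))).toReal))
    (hpos : ∀ (x : X) (r : ℝ), 0 < r → 0 < μ (Metric.ball x r) ∧ μ (Metric.ball x r) < ∞)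
    (Q S C₂ : ℝ) (hQ : 0 < Q) (hQS : Q ≤ S) (hC₂ : 1 ≤ C₂)
    (hvol : ∀ (x y : X) (r R : ℝ), 0 < r → r ≤ R → y ∈ Metric.ball x R →
      (1 / C₂) * (r / R) ^ S ≤ (μ (Metric.ball y r)).toReal / (μ (Metric.ball x R)).toReal ∧
        (μ (Metric.ball y r)).toReal / (μ (Metric.ball x R)).toReal ≤ C₂ * (r / R) ^ Q)
    (p α : ℝ) (hp : 1 ≤ p) (hα : 0 ≤ α) :
    ∃ c C : ℝ, 0 < c ∧ 0 < C ∧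
      ∀ u : X → ℝ, MemLp u (ENNReal.ofReal p) μ →
        (ENNReal.ofReal c * metricBesovQ μ p α u ≤ besovSeminorm μ K p (α / 2) u ∧
          besovSeminorm μ K p (α / 2) u ≤ ENNReal.ofReal C * metricBesovQ μ p α u) ∧
        (MemBesov μ K p (α / 2) u ↔ metricBesovQ μ p α u ≠ ∞) :=
  metric_characterization_general μ K C₁ k₁ k₂ hC₁ hk₁ hk₂ hGauss hpos Q S C₂ hC₂ hvol p α hp

end BesovDirichlet
end
end
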